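/- With the notation of the correlation remainder, the exact identity holds: $\mathrm{Rem}^d(P) = m\Big( \frac{[s_P(X_k)s_P(Y) - s_0(X_k)s_0(Y)][\mathrm{Corr}_P(X_k,Y) - \mathrm{Corr}_0(X_k,Y)]}{s_P(X_k)s_P(Y)} + \frac{(E_P X_k - E_{P_0} X_k)(E_P Y - E_{P_0} Y)}{s_P(X_k)s_P(Y)} - \frac{\mathrm{Corr}_P(X_k,Y)}{2}\big[\frac{(E_P X_k - E_{P_0} X_k)^2}{s_P^2(X_k)} + \frac{(E_P Y - E_{P_0} Y)^2}{s_P^2(Y)}\big] - \frac{\mathrm{Corr}_P(X_k,Y)}{2 s_P^2(X_k) s_P^2(Y)}[s_P(X_k)s_0(Y) - s_0(X_k)s_P(Y)]^2 \Big)$. -/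

import Mathlib

open MeasureTheory

variable {Ω : Type*} [MeasurableSpace Ω]

/-- Mean of `X` under `P`. -/
noncomputable def mean (P : Measure Ω) (X : Ω → ℝ) : ℝ := ∫ ω, X ω ∂P

/-- Standard deviation of `X` under `P`. -/
noncomputable def sd (P : Measure Ω) (X : Ω → ℝ) : ℝ :=
  Real.sqrt (mean P (fun ω => X ω ^ 2) - (mean P X) ^ 2)

/-- Pearson correlation of `X` and `Y` under `P`. -/
noncomputable def corr (P : Measure Ω) (X Y : Ω → ℝ) : ℝ :=
  (mean P (fun ω => X ω * Y ω) - mean P X * mean P Y) / (sd P X * sd P Y)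

/-- Canonical gradient of `P ↦ m · Corr_P(X, Y)`. -/
noncomputable def grad (m : ℝ) (P : Measure Ω) (X Y : Ω → ℝ) (ω : Ω) : ℝ :=
  m * ((X ω - mean P X) * (Y ω - mean P Y) / (sd P X * sd P Y) -
    (1 / 2) * corr P X Y *
      ((X ω - mean P X) ^ 2 / (sd P X) ^ 2 + (Y ω - mean P Y) ^ 2 / (sd P Y) ^ 2))

/-- Second-order remainder `Rem^d(P) = Ψ^d(P) - Ψ^d(P₀) + E_{P₀}[D^d(P)]`. -/
noncomputable def Rem (m : ℝ) (P P0 : Measure Ω) (X Y : Ω → ℝ) : ℝ :=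
  m * corr P X Y - m * corr P0 X Y + mean P0 (grad m P X Y)

set_option maxHeartbeats 1600000 in
/-- Exact expression for the second-order remainder of the correlation parameter. -/
theorem stmt_5 (P P0 : Measure Ω) [IsProbabilityMeasure P] [IsProbabilityMeasure P0]
    (Xk Y : Ω → ℝ) (hXk : Measurable Xk) (hY : Measurable Y)
    (m : ℝ) (hm : m = 1 ∨ m = -1)
    (hsPX : 0 < sd P Xk) (hsPY : 0 < sd P Y)
    (hs0X : 0 < sd P0 Xk) (hs0Y : 0 < sd P0 Y) :
    Rem m P P0 Xk Y =
      m * ((sd P Xk * sd P Y - sd P0 Xk * sd P0 Y) * (corr P Xk Y - corr P0 Xk Y) /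
            (sd P Xk * sd P Y) +
        (mean P Xk - mean P0 Xk) * (mean P Y - mean P0 Y) / (sd P Xk * sd P Y) -
        corr P Xk Y / 2 *
          ((mean P Xk - mean P0 Xk) ^ 2 / (sd P Xk) ^ 2 +
            (mean P Y - mean P0 Y) ^ 2 / (sd P Y) ^ 2) -
        corr P Xk Y / (2 * (sd P Xk) ^ 2 * (sd P Y) ^ 2) *
          (sd P Xk * sd P0 Y - sd P0 Xk * sd P Y) ^ 2) := by
  have hsx : sd P Xk ≠ 0 := hsPX.ne'
  have hsy : sd P Y ≠ 0 := hsPY.ne'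
  have hs0x : sd P0 Xk ≠ 0 := hs0X.ne'
  have hs0y : sd P0 Y ≠ 0 := hs0Y.ne'
  have hr0X : 0 < mean P0 (fun ω => Xk ω ^ 2) - (mean P0 Xk) ^ 2 := by
    have h := hs0X; unfold sd at h; exact Real.sqrt_pos.mp h
  have hr0Y : 0 < mean P0 (fun ω => Y ω ^ 2) - (mean P0 Y) ^ 2 := by
    have h := hs0Y; unfold sd at h; exact Real.sqrt_pos.mp h
  have hiX2 : Integrable (fun ω => Xk ω ^ 2) P0 := by
    by_contra h
    have h0 : mean P0 (fun ω => Xk ω ^ 2) = 0 := integral_undef h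
    nlinarith [sq_nonneg (mean P0 Xk)]
  have hiY2 : Integrable (fun ω => Y ω ^ 2) P0 := by
    by_contra h
    have h0 : mean P0 (fun ω => Y ω ^ 2) = 0 := integral_undef h
    nlinarith [sq_nonneg (mean P0 Y)]
  have hiX : Integrable Xk P0 := by
    apply Integrable.mono' (hiX2.add (integrable_const 1)) hXk.aestronglyMeasurable
    filter_upwards with ω
    simp only [Real.norm_eq_abs, Pi.add_apply]
    nlinarith [sq_abs (Xk ω), sq_nonneg (|Xk ω| - 1), abs_nonneg (Xk ω)]
  have hiY : Integrable Y P0 := by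
    apply Integrable.mono' (hiY2.add (integrable_const 1)) hY.aestronglyMeasurable
    filter_upwards with ω
    simp only [Real.norm_eq_abs, Pi.add_apply]
    nlinarith [sq_abs (Y ω), sq_nonneg (|Y ω| - 1), abs_nonneg (Y ω)]
  have hiXY : Integrable (fun ω => Xk ω * Y ω) P0 := by
    apply Integrable.mono' (hiX2.add hiY2) (hXk.mul hY).aestronglyMeasurable
    filter_upwards with ω
    simp only [Real.norm_eq_abs, Pi.mul_apply, abs_mul, Pi.add_apply]
    nlinarith [sq_nonneg (|Xk ω| - |Y ω|), sq_abs (Xk ω), sq_abs (Y ω),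
      mul_nonneg (abs_nonneg (Xk ω)) (abs_nonneg (Y ω))]
  set μX := mean P Xk with hmX
  set μY := mean P Y with hmY
  set sx := sd P Xk with hsxd
  set sy := sd P Y with hsyd
  set ρ := corr P Xk Y with hrho
  set c1 : ℝ := m / (sx * sy) with hc1
  set c2 : ℝ := m * (ρ * μX / sx ^ 2 - μY / (sx * sy)) with hc2
  set c3 : ℝ := m * (ρ * μY / sy ^ 2 - μX / (sx * sy)) with hc3
  set c4 : ℝ := -(m * ρ / (2 * sx ^ 2)) with hc4
  set c5 : ℝ := -(m * ρ / (2 * sy ^ 2)) with hc5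
  set c6 : ℝ := m * (μX * μY / (sx * sy) - ρ / 2 * (μX ^ 2 / sx ^ 2 + μY ^ 2 / sy ^ 2)) with hc6
  have hgrad : grad m P Xk Y = fun ω =>
      c1 * (Xk ω * Y ω) + c2 * Xk ω + c3 * Y ω + c4 * (Xk ω ^ 2) + c5 * (Y ω ^ 2) + c6 := by
    funext ω
    unfold grad
    rw [← hrho, ← hsxd, ← hsyd, ← hmX, ← hmY, hc1, hc2, hc3, hc4, hc5, hc6]
    field_simp
    ring
  have hmean : mean P0 (grad m P Xk Y) =
      c1 * mean P0 (fun ω => Xk ω * Y ω) + c2 * mean P0 Xk + c3 * mean P0 Y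
        + c4 * mean P0 (fun ω => Xk ω ^ 2) + c5 * mean P0 (fun ω => Y ω ^ 2) + c6 := by
    have I1 : Integrable (fun ω => c1 * (Xk ω * Y ω)) P0 := hiXY.const_mul c1
    have I2 : Integrable (fun ω => c1 * (Xk ω * Y ω) + c2 * Xk ω) P0 :=
      I1.add (hiX.const_mul c2)
    have I3 : Integrable (fun ω => c1 * (Xk ω * Y ω) + c2 * Xk ω + c3 * Y ω) P0 :=
      I2.add (hiY.const_mul c3)
    have I4 : Integrable
        (fun ω => c1 * (Xk ω * Y ω) + c2 * Xk ω + c3 * Y ω + c4 * Xk ω ^ 2) P0 :=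
      I3.add (hiX2.const_mul c4)
    have I5 : Integrable
        (fun ω => c1 * (Xk ω * Y ω) + c2 * Xk ω + c3 * Y ω + c4 * Xk ω ^ 2 + c5 * Y ω ^ 2) P0 :=
      I4.add (hiY2.const_mul c5)
    rw [hgrad]
    unfold mean
    rw [integral_add I5 (integrable_const c6), integral_add I4 (hiY2.const_mul c5),
      integral_add I3 (hiX2.const_mul c4), integral_add I2 (hiY.const_mul c3),
      integral_add I1 (hiX.const_mul c2),
      integral_const_mul, integral_const_mul, integral_const_mul, integral_const_mul,
      integral_const_mul, integral_const]
    simp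
  have hs0x2 : sd P0 Xk ^ 2 = mean P0 (fun ω => Xk ω ^ 2) - (mean P0 Xk) ^ 2 := by
    unfold sd; exact Real.sq_sqrt hr0X.le
  have hs0y2 : sd P0 Y ^ 2 = mean P0 (fun ω => Y ω ^ 2) - (mean P0 Y) ^ 2 := by
    unfold sd; exact Real.sq_sqrt hr0Y.le
  have hE0XY : mean P0 (fun ω => Xk ω * Y ω) =
      corr P0 Xk Y * (sd P0 Xk * sd P0 Y) + mean P0 Xk * mean P0 Y := by
    unfold corr
    field_simp
    ring
  have hE0X2 : mean P0 (fun ω => Xk ω ^ 2) = sd P0 Xk ^ 2 + (mean P0 Xk) ^ 2 := by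
    rw [hs0x2]; ring
  have hE0Y2 : mean P0 (fun ω => Y ω ^ 2) = sd P0 Y ^ 2 + (mean P0 Y) ^ 2 := by
    rw [hs0y2]; ring
  unfold Rem
  rw [hmean, hE0XY, hE0X2, hE0Y2, hc1, hc2, hc3, hc4, hc5, hc6]
  field_simp
  ring
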